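/- arXiv:1309.5172 — 2 statements merged into one kernel-verified Lean document; each statement's English description precedes it below -/
import Mathlib

section
/- Let G = (V,E) be a connected weighted graph, B a natural number, and suppose there exist B+2 vertices of G at pairwise distance greater than D. Then every graph obtained from G by adding at most B new edges (each of cost at least 1, with non-negative weights) has diameter greater than D. Consequently, the optimal diameter D^B_opt achievable by adding edges of total cost at most B is greater than D. -/
/-!
Adding an edge `uv` of weight `t` turns a distance `d` into the shortcut distance
`min (d p q) (min (d p u + t + d v q) (d p v + t + d u q))`, which is again a pseudometric and
bounds the new graph distance from below. Call `(p, q)` an arc if `d p u + t + d v q ≤ D`.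
Two arcs `(p₁, q₁)`, `(p₂, q₂)` between points of a set `S` at pairwise distance `> D` must share
their tail or their head, since otherwise `d p₁ p₂ + d q₁ q₂ ≤ 2D`; hence all arcs pass through
one point, and after removing it from `S` the remaining points are still at pairwise distance
`> D`. Each added edge thus costs at most one point, and `B + 2` points survive `B` edges with
at least two left.
-/

open scoped ENNReal

noncomputable def walkWeight {V : Type*} {G : SimpleGraph V} (w : V → V → ℝ≥0∞) {u v : V}
    (p : G.Walk u v) : ℝ≥0∞ :=
  (p.darts.map fun d => w d.toProd.1 d.toProd.2).sum

noncomputable def wdist {V : Type*} (G : SimpleGraph V) (w : V → V → ℝ≥0∞) (u v : V) : ℝ≥0∞ :=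
  ⨅ p : G.Walk u v, walkWeight w p

noncomputable def wdiam {V : Type*} (G : SimpleGraph V) (w : V → V → ℝ≥0∞) : ℝ≥0∞ :=
  ⨆ x, ⨆ y, wdist G w x y

/-- `G'` is a `B`-augmentation of `G` w.r.t. the cost function `cst`: it is obtained from `G`
by adding a set of non-edges of total cost at most `B`. -/
def IsAug {V : Type*} (G : SimpleGraph V) (cst : Sym2 V → ℕ) (B : ℕ)
    (G' : SimpleGraph V) : Prop :=
  ∃ F : Finset (Sym2 V), (∀ e ∈ F, e ∉ G.edgeSet ∧ ¬ e.IsDiag) ∧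
    (∑ e ∈ F, cst e) ≤ B ∧ G' = G ⊔ SimpleGraph.fromEdgeSet ↑F

open SimpleGraph

structure IsPseudoEMetric {V : Type*} (d : V → V → ℝ≥0∞) : Prop where
  self : ∀ x, d x x = 0
  symm : ∀ x y, d x y = d y x
  triangle : ∀ x y z, d x z ≤ d x y + d y z

theorem exists_eq_or_eq_of_forall_eq_or_eq {α : Type*} [Nonempty α] {R : α → α → Prop}
    (h : ∀ a b c d, R a b → R c d → a = c ∨ b = d) : ∃ x, ∀ a b, R a b → a = x ∨ b = x := by
  by_contra! hR
  obtain ⟨p₁, q₁, h₁, -, -⟩ := hR (Classical.arbitrary α)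
  obtain ⟨p₂, q₂, h₂, hp₂, -⟩ := hR p₁
  obtain ⟨p₃, q₃, h₃, -, hq₃⟩ := hR q₁
  have hq₂ : q₁ = q₂ := (h _ _ _ _ h₁ h₂).resolve_left (Ne.symm hp₂)
  have hp₁₃ : p₁ = p₃ := (h _ _ _ _ h₁ h₃).resolve_right (Ne.symm hq₃)
  have hp₂₃ : p₂ = p₃ := (h _ _ _ _ h₂ h₃).resolve_right (hq₂ ▸ Ne.symm hq₃)
  exact hp₂ (hp₂₃.trans hp₁₃.symm)

theorem exists_forall_lt_add_add_of_pairwise {V : Type*} {d : V → V → ℝ≥0∞}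
    (hsymm : ∀ x y, d x y = d y x) (htri : ∀ x y z, d x z ≤ d x y + d y z) {D : ℝ≥0∞} {S : Set V}
    (hS : S.Pairwise fun p q => D < d p q) (u v : V) (t : ℝ≥0∞) :
    ∃ x, ∀ p ∈ S, ∀ q ∈ S, p ≠ x → q ≠ x → D < d p u + t + d v q := by
  have : Nonempty V := ⟨u⟩
  obtain ⟨x, hx⟩ := exists_eq_or_eq_of_forall_eq_or_eq
    (R := fun p q => p ∈ S ∧ q ∈ S ∧ d p u + t + d v q ≤ D) <| by
    rintro p₁ q₁ p₂ q₂ ⟨hp₁, hq₁, h₁⟩ ⟨hp₂, hq₂, h₂⟩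
    by_contra! hne
    refine lt_irrefl (D + D) ?_
    calc D + D < d p₁ p₂ + d q₁ q₂ := ENNReal.add_lt_add (hS hp₁ hp₂ hne.1) (hS hq₁ hq₂ hne.2)
      _ ≤ d p₁ u + d u p₂ + (d q₁ v + d v q₂) := add_le_add (htri _ _ _) (htri _ _ _)
      _ = d p₁ u + d v q₁ + (d p₂ u + d v q₂) := by rw [hsymm u, hsymm q₁]; ring
      _ ≤ d p₁ u + d v q₁ + t + (d p₂ u + d v q₂ + t) := add_le_add le_self_add le_self_add
      _ = d p₁ u + t + d v q₁ + (d p₂ u + t + d v q₂) := by ring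
      _ ≤ D + D := add_le_add h₁ h₂
  exact ⟨x, fun p hp q hq hpx hqx => lt_of_not_ge fun h => (hx p q ⟨hp, hq, h⟩).elim hpx hqx⟩

section Shortcut

variable {V : Type*} (d : V → V → ℝ≥0∞) (u v : V) (t : ℝ≥0∞)

noncomputable def throughEdge (p q : V) : ℝ≥0∞ :=
  min (d p u + t + d v q) (d p v + t + d u q)

noncomputable def shortcut (p q : V) : ℝ≥0∞ :=
  min (d p q) (throughEdge d u v t p q)

variable {d u v t}

theorem throughEdge_comm (hsymm : ∀ x y, d x y = d y x) (p q : V) :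
    throughEdge d u v t p q = throughEdge d u v t q p := by
  rw [throughEdge, throughEdge, min_comm]
  congr 1 <;> rw [hsymm p, hsymm _ q] <;> ring

theorem throughEdge_le_add_left (htri : ∀ x y z, d x z ≤ d x y + d y z) (p r q : V) :
    throughEdge d u v t p q ≤ d p r + throughEdge d u v t r q := by
  rw [throughEdge, throughEdge, add_min]
  refine min_le_min ?_ ?_
  · calc d p u + t + d v q ≤ d p r + d r u + t + d v q := by gcongr; exact htri p r u
      _ = _ := by ring
  · calc d p v + t + d u q ≤ d p r + d r v + t + d u q := by gcongr; exact htri p r v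
      _ = _ := by ring

theorem throughEdge_le_add_right (htri : ∀ x y z, d x z ≤ d x y + d y z) (p r q : V) :
    throughEdge d u v t p q ≤ throughEdge d u v t p r + d r q := by
  rw [throughEdge, throughEdge, min_add]
  refine min_le_min ?_ ?_
  · calc d p u + t + d v q ≤ d p u + t + (d v r + d r q) := by gcongr; exact htri v r q
      _ = _ := by ring
  · calc d p v + t + d u q ≤ d p v + t + (d u r + d r q) := by gcongr; exact htri u r q
      _ = _ := by ring

theorem shortcut_le_throughEdge_add_throughEdge (htri : ∀ x y z, d x z ≤ d x y + d y z)
    (p r q : V) :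
    shortcut d u v t p q ≤ throughEdge d u v t p r + throughEdge d u v t r q := by
  have h₁ : shortcut d u v t p q ≤ d p u + t + d v q := (min_le_right _ _).trans (min_le_left _ _)
  have h₂ : shortcut d u v t p q ≤ d p v + t + d u q := (min_le_right _ _).trans (min_le_right _ _)
  have h₃ : shortcut d u v t p q ≤ d p q := min_le_left _ _
  rw [throughEdge, throughEdge, min_add, add_min, add_min]
  refine le_min (le_min ?_ ?_) (le_min ?_ ?_)
  · calc shortcut d u v t p q ≤ d p u + t + d v q + (d v r + d r u + t) := h₁.trans le_self_add
      _ = _ := by ring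
  · calc shortcut d u v t p q ≤ d p u + d u q + (t + d v r + d r v + t) :=
          (h₃.trans (htri p u q)).trans le_self_add
      _ = _ := by ring
  · calc shortcut d u v t p q ≤ d p v + d v q + (t + d u r + d r u + t) :=
          (h₃.trans (htri p v q)).trans le_self_add
      _ = _ := by ring
  · calc shortcut d u v t p q ≤ d p v + t + d u q + (d u r + d r v + t) := h₂.trans le_self_add
      _ = _ := by ring

theorem isPseudoEMetric_shortcut (hd : IsPseudoEMetric d) (u v : V) (t : ℝ≥0∞) :
    IsPseudoEMetric (shortcut d u v t) where
  self x := le_antisymm ((min_le_left _ _).trans_eq (hd.self x)) zero_le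
  symm p q := by rw [shortcut, shortcut, hd.symm p, throughEdge_comm hd.symm]
  triangle p r q := by
    unfold shortcut
    rw [min_add, add_min, add_min]
    refine le_min (le_min ?_ ?_) (le_min ?_ ?_)
    · exact (min_le_left _ _).trans (hd.triangle p r q)
    · exact (min_le_right _ _).trans (throughEdge_le_add_left hd.triangle p r q)
    · exact (min_le_right _ _).trans (throughEdge_le_add_right hd.triangle p r q)
    · exact shortcut_le_throughEdge_add_throughEdge hd.triangle p r q

theorem shortcut_le_weight (hself : ∀ x, d x x = 0) : shortcut d u v t u v ≤ t :=
  (min_le_right _ _).trans ((min_le_left _ _).trans_eq (by simp [hself]))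

end Shortcut

section WeightedDistance

variable {V : Type*} {G H : SimpleGraph V} {w : V → V → ℝ≥0∞}

theorem wdist_le_walkWeight {x y : V} (p : G.Walk x y) : wdist G w x y ≤ walkWeight w p :=
  iInf_le _ p

theorem wdist_self (x : V) : wdist G w x x = 0 :=
  le_antisymm ((wdist_le_walkWeight Walk.nil).trans_eq (by simp [walkWeight])) zero_le

theorem wdist_le_of_adj {x y : V} (h : G.Adj x y) : wdist G w x y ≤ w x y :=
  (wdist_le_walkWeight (Walk.cons h Walk.nil)).trans_eq (by simp [walkWeight])

theorem walkWeight_reverse (hw : ∀ x y, w x y = w y x) {x y : V} (p : G.Walk x y) :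
    walkWeight w p.reverse = walkWeight w p := by
  simp only [walkWeight, Walk.darts_reverse, List.map_reverse, List.sum_reverse, List.map_map]
  exact congrArg List.sum (List.map_congr_left fun _ _ => hw _ _)

theorem wdist_comm (hw : ∀ x y, w x y = w y x) (x y : V) : wdist G w x y = wdist G w y x := by
  have h : ∀ a b, wdist G w a b ≤ wdist G w b a := fun a b =>
    le_iInf fun p => (wdist_le_walkWeight p.reverse).trans_eq (walkWeight_reverse hw p)
  exact le_antisymm (h x y) (h y x)

theorem wdist_triangle (x y z : V) : wdist G w x z ≤ wdist G w x y + wdist G w y z :=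
  ENNReal.le_iInf_add_iInf fun p q =>
    (wdist_le_walkWeight (p.append q)).trans_eq (by simp [walkWeight, Walk.darts_append])

theorem isPseudoEMetric_wdist (hw : ∀ x y, w x y = w y x) : IsPseudoEMetric (wdist G w) :=
  ⟨wdist_self, wdist_comm hw, wdist_triangle⟩

theorem le_wdist_of_forall_adj_le {d : V → V → ℝ≥0∞} (hself : ∀ x, d x x = 0)
    (htri : ∀ x y z, d x z ≤ d x y + d y z) (hadj : ∀ a b, G.Adj a b → d a b ≤ w a b)
    (x y : V) : d x y ≤ wdist G w x y := by
  refine le_iInf fun p => ?_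
  induction p with
  | nil => simp [hself, walkWeight]
  | @cons a b c h p ih =>
    refine (htri a b c).trans ?_
    simpa [walkWeight] using add_le_add (hadj _ _ h) ih

theorem shortcut_wdist_le_wdist_sup_edge (hw : ∀ x y, w x y = w y x) (u v x y : V) :
    shortcut (wdist H w) u v (w u v) x y ≤ wdist (H ⊔ edge u v) w x y := by
  have hd := isPseudoEMetric_shortcut (isPseudoEMetric_wdist (G := H) hw) u v (w u v)
  refine le_wdist_of_forall_adj_le hd.self hd.triangle (fun a b hab => ?_) x y
  rcases (sup_adj _ _ _ _).mp hab with hab | hab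
  · exact (min_le_left _ _).trans (wdist_le_of_adj hab)
  · obtain ⟨⟨rfl, rfl⟩ | ⟨rfl, rfl⟩, -⟩ := (edge_adj _ _ _ _).mp hab
    · exact shortcut_le_weight wdist_self
    · rw [hd.symm, hw]
      exact shortcut_le_weight wdist_self

theorem exists_pairwise_lt_wdist_sup_edge [DecidableEq V] (hw : ∀ x y, w x y = w y x)
    {D : ℝ≥0∞} {S : Finset V} (hS : (S : Set V).Pairwise fun p q => D < wdist H w p q)
    (u v : V) :
    ∃ x, (S.erase x : Set V).Pairwise fun p q => D < wdist (H ⊔ edge u v) w p q := by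
  obtain ⟨x, hx⟩ := exists_forall_lt_add_add_of_pairwise (wdist_comm hw) wdist_triangle hS u v
    (w u v)
  refine ⟨x, fun p hp q hq hpq => ?_⟩
  simp only [Finset.coe_erase, Set.mem_sdiff, Finset.mem_coe, Set.mem_singleton_iff] at hp hq
  refine (lt_min (hS hp.1 hq.1 hpq) (lt_min (hx p hp.1 q hq.1 hp.2 hq.2) ?_)).trans_le
    (shortcut_wdist_le_wdist_sup_edge hw u v p q)
  rw [wdist_comm hw p, wdist_comm hw u]
  exact (hx q hq.1 p hp.1 hq.2 hp.2).trans_eq (by ring)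

theorem exists_lt_wdist_sup_fromEdgeSet [DecidableEq V] (hw : ∀ x y, w x y = w y x)
    {D : ℝ≥0∞} (F : Finset (Sym2 V)) {H : SimpleGraph V} {S : Finset V}
    (hS : (S : Set V).Pairwise fun p q => D < wdist H w p q) (hcard : F.card + 2 ≤ S.card) :
    ∃ p ∈ S, ∃ q ∈ S, p ≠ q ∧ D < wdist (H ⊔ fromEdgeSet F) w p q := by
  induction F using Finset.induction_on generalizing H S with
  | empty =>
    obtain ⟨p, hp, q, hq, hpq⟩ := (Finset.one_lt_card (s := S)).mp (by simp at hcard; omega)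
    simpa using ⟨p, hp, q, hq, hpq, hS hp hq hpq⟩
  | insert e F he ih =>
    induction e using Sym2.ind with
    | _ u v =>
      obtain ⟨x, hx⟩ := exists_pairwise_lt_wdist_sup_edge hw hS u v
      have hcard' : F.card + 2 ≤ (S.erase x).card := by
        have := S.pred_card_le_card_erase (a := x)
        rw [Finset.card_insert_of_notMem he] at hcard
        omega
      obtain ⟨p, hp, q, hq, hpq, hlt⟩ := ih hx hcard'
      refine ⟨p, Finset.mem_of_mem_erase hp, q, Finset.mem_of_mem_erase hq, hpq, ?_⟩
      rwa [Finset.coe_insert, Set.insert_eq, fromEdgeSet_union, ← sup_assoc, ← edge]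

end WeightedDistance

theorem stmt2_general {V : Type*} [Fintype V] (G : SimpleGraph V)
    (w : V → V → ℝ≥0∞) (hw : ∀ x y, w x y = w y x)
    (cst : Sym2 V → ℕ) (hcst : ∀ e, 1 ≤ cst e) (B : ℕ) (D : ℝ≥0∞)
    (A : Finset V) (hA : A.card = B + 2)
    (hfar : ∀ x ∈ A, ∀ y ∈ A, x ≠ y → D < wdist G w x y) :
    (∀ G' : SimpleGraph V, IsAug G cst B G' → D < wdiam G' w) ∧
      D < ⨅ (G' : SimpleGraph V) (_ : IsAug G cst B G'), wdiam G' w := by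
  classical
  have hdiam : ∀ G' : SimpleGraph V, IsAug G cst B G' → D < wdiam G' w := by
    rintro G' ⟨F, -, hcost, rfl⟩
    have hF : F.card ≤ B := by simpa using (F.card_nsmul_le_sum cst 1 fun e _ => hcst e).trans hcost
    obtain ⟨p, -, q, -, -, hlt⟩ :=
      exists_lt_wdist_sup_fromEdgeSet hw F (fun x hx y hy => hfar x hx y hy) (by omega)
    exact hlt.trans_le (le_iSup₂ (f := fun x y => wdist _ w x y) p q)
  refine ⟨hdiam, ?_⟩
  have : Nonempty {G' // IsAug G cst B G'} := ⟨G, ∅, by simp, by simp, by simp⟩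
  obtain ⟨G₀, hG₀⟩ := exists_eq_ciInf_of_finite (f := fun G' : {G' // IsAug G cst B G'} =>
    wdiam G'.1 w)
  rw [iInf_subtype', ← hG₀]
  exact hdiam _ G₀.2

/-- If `G` contains `B+2` vertices at pairwise distance greater than `D`, then every
`B`-augmentation of `G` (costs are at least 1) has diameter greater than `D`; consequently,
the optimal diameter of a `B`-augmentation is greater than `D`. -/
theorem stmt2 {V : Type*} [Fintype V] (G : SimpleGraph V) (hconn : G.Connected)
    (w : V → V → ℝ≥0∞) (hw : ∀ x y, w x y = w y x)
    (cst : Sym2 V → ℕ) (hcst : ∀ e, 1 ≤ cst e) (B : ℕ) (D : ℝ≥0∞)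
    (A : Finset V) (hA : A.card = B + 2)
    (hfar : ∀ x ∈ A, ∀ y ∈ A, x ≠ y → D < wdist G w x y) :
    (∀ G' : SimpleGraph V, IsAug G cst B G' → D < wdiam G' w) ∧
      D < ⨅ (G' : SimpleGraph V) (_ : IsAug G cst B G'), wdiam G' w :=
  stmt2_general G w hw cst hcst B D A hA hfar
end

section
/- In the Set Cover reduction: (X,S,k) has a set cover of size at most k if and only if there exists a set F of at most k non-edges of the constructed graph G such that the graph (V, E ∪ F) has diameter at most 2. -/
/-- Vertices of the reduction graph built from a Set Cover instance `(X, k)` over element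
type `α`, with `m` copies of the element set: `a`, `b`, one vertex `y x` per set `x ∈ X`,
vertices `t i s` (copy `i` of element `s`), and one vertex `u p` per pair of distinct
copy indices. -/
inductive RV (α : Type) (X : Finset (Finset α)) (m : ℕ) : Type where
  | a : RV α X m
  | b : RV α X m
  | y : {x : Finset α // x ∈ X} → RV α X m
  | t : Fin m → α → RV α X m
  | u : {p : Fin m × Fin m // p.1 < p.2} → RV α X m

/-- Base (one-sided) adjacency relation of the reduction graph. -/
def baseRel {α : Type} {X : Finset (Finset α)} {m : ℕ} : RV α X m → RV α X m → Prop
  | RV.a, RV.b => True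
  | RV.b, RV.y _ => True
  | RV.b, RV.u _ => True
  | RV.y _, RV.y _ => True
  | RV.y x, RV.t _ s => s ∈ x.1
  | RV.t i _, RV.u p => i = p.1.1 ∨ i = p.1.2
  | RV.u _, RV.u _ => True
  | _, _ => False

/-- The reduction graph: the symmetrization of `baseRel`. -/
def RG (α : Type) (X : Finset (Finset α)) (m : ℕ) : SimpleGraph (RV α X m) :=
  SimpleGraph.fromRel baseRel

section Aux
variable {α : Type} {X : Finset (Finset α)} {m : ℕ}

lemma exists_pair (hm2 : 2 ≤ m) (i i' : Fin m) :
    ∃ p : {p : Fin m × Fin m // p.1 < p.2},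
      (i = p.1.1 ∨ i = p.1.2) ∧ (i' = p.1.1 ∨ i' = p.1.2) := by
  rcases lt_trichotomy i i' with h | h | h
  · exact ⟨⟨(i, i'), h⟩, Or.inl rfl, Or.inr rfl⟩
  · subst h
    by_cases h0 : i = ⟨0, by omega⟩
    · refine ⟨⟨(⟨0, by omega⟩, ⟨1, by omega⟩), by simp [Fin.lt_def]⟩, ?_, ?_⟩ <;>
        exact Or.inl h0
    · have : (⟨0, by omega⟩ : Fin m) < i := by
        rcases Nat.eq_zero_or_pos i.val with h1 | h1
        · exact absurd (Fin.ext h1) h0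
        · exact h1
      exact ⟨⟨(⟨0, by omega⟩, i), this⟩, Or.inr rfl, Or.inr rfl⟩
  · exact ⟨⟨(i', i), h⟩, Or.inr rfl, Or.inl rfl⟩

lemma walk0 {V : Type} {G : SimpleGraph V} (v : V) :
    ∃ p : G.Walk v v, p.length ≤ 2 := ⟨.nil, by simp⟩

lemma walk1 {V : Type} {G : SimpleGraph V} {v w : V} (h : G.Adj v w) :
    ∃ p : G.Walk v w, p.length ≤ 2 := ⟨.cons h .nil, by simp⟩

lemma walk2 {V : Type} {G : SimpleGraph V} {v w z : V} (h1 : G.Adj v z) (h2 : G.Adj z w) :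
    ∃ p : G.Walk v w, p.length ≤ 2 := ⟨.cons h1 (.cons h2 .nil), by simp⟩

def touchIdx : RV α X m → Finset (Fin m)
  | RV.t i _ => {i}
  | RV.u p => {p.1.1, p.1.2}
  | _ => ∅

lemma touchIdx_comm (v w : RV α X m) : touchIdx v ∪ touchIdx w = touchIdx w ∪ touchIdx v :=
  Finset.union_comm _ _

def badIdx : Sym2 (RV α X m) → Finset (Fin m) :=
  Sym2.lift ⟨fun v w => touchIdx v ∪ touchIdx w, touchIdx_comm⟩

lemma mem_badIdx_left {v w : RV α X m} {j : Fin m} (h : j ∈ touchIdx v) :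
    j ∈ badIdx s(v, w) := by
  simp only [badIdx, Sym2.lift_mk, Finset.mem_union]; exact Or.inl h

lemma mem_badIdx_right {v w : RV α X m} {j : Fin m} (h : j ∈ touchIdx w) :
    j ∈ badIdx s(v, w) := by
  simp only [badIdx, Sym2.lift_mk, Finset.mem_union]; exact Or.inr h

lemma touchIdx_card (v : RV α X m) : (touchIdx v).card ≤ 2 := by
  cases v <;> simp [touchIdx] <;> exact Finset.card_insert_le _ _ |>.trans (by simp)

lemma touch_le_one (v : RV α X m) (h : ∀ p, v ≠ RV.u p) : (touchIdx v).card ≤ 1 := by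
  cases v <;> first | exact absurd rfl (h _) | simp [touchIdx]

lemma badIdx_card {e : Sym2 (RV α X m)} (he : e ∉ (RG α X m).edgeSet) (hd : ¬ e.IsDiag) :
    (badIdx e).card ≤ 3 := by
  induction e using Sym2.ind with
  | _ v w =>
    have hvw : v ≠ w := by simpa using hd
    have hadj : ¬ (RG α X m).Adj v w := by rw [SimpleGraph.mem_edgeSet] at he; exact he
    have hcard : (badIdx s(v, w)).card ≤ (touchIdx v).card + (touchIdx w).card := by
      simpa [badIdx] using Finset.card_union_le (touchIdx v) (touchIdx w)
    have hu : (∀ p, v ≠ RV.u p) ∨ (∀ p, w ≠ RV.u p) := by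
      by_contra hc
      push_neg at hc
      obtain ⟨⟨p, hp⟩, ⟨q, hq⟩⟩ := hc
      subst hp; subst hq
      exact hadj (by rw [RG, SimpleGraph.fromRel_adj]; exact ⟨hvw, Or.inl trivial⟩)
    have h2v := touchIdx_card v
    have h2w := touchIdx_card w
    rcases hu with h | h
    · have := touch_le_one v h; omega
    · have := touch_le_one w h; omega

lemma RG_adj (v w : RV α X m) :
    (RG α X m).Adj v w ↔ v ≠ w ∧ (baseRel v w ∨ baseRel w v) := by
  rw [RG, SimpleGraph.fromRel_adj]

lemma adj_ab : (RG α X m).Adj RV.a RV.b := by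
  rw [RG_adj]; exact ⟨by simp, Or.inl (by simp [baseRel])⟩

lemma adj_by (x : {x : Finset α // x ∈ X}) : (RG α X m).Adj RV.b (RV.y x) := by
  rw [RG_adj]; exact ⟨by simp, Or.inl (by simp [baseRel])⟩

lemma adj_bu (p : {p : Fin m × Fin m // p.1 < p.2}) : (RG α X m).Adj RV.b (RV.u p) := by
  rw [RG_adj]; exact ⟨by simp, Or.inl (by simp [baseRel])⟩

lemma adj_yy {x x' : {x : Finset α // x ∈ X}} (h : x ≠ x') :
    (RG α X m).Adj (RV.y x) (RV.y x') := by
  rw [RG_adj]; exact ⟨by simp [h], Or.inl (by simp [baseRel])⟩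

lemma adj_yt {x : {x : Finset α // x ∈ X}} (i : Fin m) {s : α} (h : s ∈ x.1) :
    (RG α X m).Adj (RV.y x) (RV.t i s) := by
  rw [RG_adj]; exact ⟨by simp, Or.inl (by simpa [baseRel] using h)⟩

lemma adj_tu {i : Fin m} (s : α) {p : {p : Fin m × Fin m // p.1 < p.2}}
    (h : i = p.1.1 ∨ i = p.1.2) : (RG α X m).Adj (RV.t i s) (RV.u p) := by
  rw [RG_adj]; exact ⟨by simp, Or.inl (by simpa [baseRel] using h)⟩

lemma adj_uu {p q : {p : Fin m × Fin m // p.1 < p.2}} (h : p ≠ q) :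
    (RG α X m).Adj (RV.u p) (RV.u q) := by
  rw [RG_adj]; exact ⟨by simp [h], Or.inl (by simp [baseRel])⟩

lemma adj_iff (F : Finset (Sym2 (RV α X m))) (v w : RV α X m) :
    (RG α X m ⊔ SimpleGraph.fromEdgeSet ↑F).Adj v w ↔
      (v ≠ w ∧ (baseRel v w ∨ baseRel w v)) ∨ (s(v, w) ∈ F ∧ v ≠ w) := by
  rw [SimpleGraph.sup_adj, RG, SimpleGraph.fromRel_adj, SimpleGraph.fromEdgeSet_adj]
  simp

end Aux

/-- Correctness of the reduction: the Set Cover instance has a cover of size at most `k`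
iff at most `k` non-edges can be added to the reduction graph so that every two vertices
are joined by a walk of length at most 2 (i.e. the diameter becomes at most 2). -/
theorem stmt18 {α : Type} (X : Finset (Finset α)) (k m : ℕ)
    (hm : m = X.card * k) (hk : 1 ≤ k) (hX : 4 ≤ X.card) :
    (∃ X' ⊆ X, X'.card ≤ k ∧ ∀ s : α, ∃ x ∈ X', s ∈ x) ↔
    (∃ F : Finset (Sym2 (RV α X m)), F.card ≤ k ∧
      (∀ e ∈ F, e ∉ (RG α X m).edgeSet ∧ ¬ e.IsDiag) ∧
      ∀ x y : RV α X m,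
        ∃ p : (RG α X m ⊔ SimpleGraph.fromEdgeSet ↑F).Walk x y, p.length ≤ 2) := by
  classical
  have hm4 : 4 ≤ m := by
    have h1 : 4 * 1 ≤ X.card * k := Nat.mul_le_mul hX hk
    omega
  have hm2 : 2 ≤ m := by omega
  constructor
  · rintro ⟨X', hsub, hXcard, hcov⟩
    refine ⟨(X.attach.filter (fun x => x.1 ∈ X')).image (fun x => s(RV.a, RV.y x)), ?_, ?_, ?_⟩
    · calc ((X.attach.filter (fun x => x.1 ∈ X')).image (fun x => s(RV.a, RV.y x))).card
          ≤ (X.attach.filter (fun x => x.1 ∈ X')).card := Finset.card_image_le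
        _ ≤ X'.card := by
            apply Finset.card_le_card_of_injOn (fun x => x.1)
            · intro x hx; exact (Finset.mem_filter.mp hx).2
            · intro x _ x' _ h; exact Subtype.ext h
        _ ≤ k := hXcard
    · intro e he
      obtain ⟨x, -, rfl⟩ := Finset.mem_image.mp he
      constructor
      · rw [SimpleGraph.mem_edgeSet, RG_adj]
        simp [baseRel]
      · simp
    · set F : Finset (Sym2 (RV α X m)) :=
        (X.attach.filter (fun x => x.1 ∈ X')).image (fun x => s(RV.a, RV.y x)) with hF
      have gAdj : ∀ {v w : RV α X m}, (RG α X m).Adj v w →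
          (RG α X m ⊔ SimpleGraph.fromEdgeSet (↑F)).Adj v w := by
        intro v w h
        rw [SimpleGraph.sup_adj]; exact Or.inl h
      have haY : ∀ x : {x : Finset α // x ∈ X}, x.1 ∈ X' →
          (RG α X m ⊔ SimpleGraph.fromEdgeSet (↑F)).Adj RV.a (RV.y x) := by
        intro x hx
        rw [SimpleGraph.sup_adj]
        right
        rw [SimpleGraph.fromEdgeSet_adj]
        refine ⟨Finset.mem_coe.mpr (Finset.mem_image.mpr
          ⟨x, Finset.mem_filter.mpr ⟨X.mem_attach x, hx⟩, rfl⟩), by simp⟩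
      have hc : ∀ s : α, ∃ x : {x : Finset α // x ∈ X}, x.1 ∈ X' ∧ s ∈ x.1 := by
        intro s
        obtain ⟨x0, hx0, hs⟩ := hcov s
        exact ⟨⟨x0, hsub hx0⟩, hx0, hs⟩
      intro v w
      cases v with
      | a => cases w with
        | a => exact walk0 _
        | b => exact walk1 (gAdj adj_ab)
        | y x => exact walk2 (gAdj adj_ab) (gAdj (adj_by x))
        | t i s =>
            obtain ⟨x, hx', hs⟩ := hc s
            exact walk2 (haY x hx') (gAdj (adj_yt i hs))
        | u p => exact walk2 (gAdj adj_ab) (gAdj (adj_bu p))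
      | b => cases w with
        | a => exact walk1 (gAdj adj_ab.symm)
        | b => exact walk0 _
        | y x => exact walk1 (gAdj (adj_by x))
        | t i s =>
            obtain ⟨p, hp, -⟩ := exists_pair hm2 i i
            exact walk2 (gAdj (adj_bu p)) (gAdj (adj_tu s hp).symm)
        | u p => exact walk1 (gAdj (adj_bu p))
      | y x => cases w with
        | a => exact walk2 (gAdj (adj_by x).symm) (gAdj adj_ab.symm)
        | b => exact walk1 (gAdj (adj_by x).symm)
        | y x' =>
            by_cases h : x = x'
            · subst h; exact walk0 _
            · exact walk1 (gAdj (adj_yy h))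
        | t i s =>
            by_cases hs : s ∈ x.1
            · exact walk1 (gAdj (adj_yt i hs))
            · obtain ⟨x0, hx0', hs0⟩ := hc s
              have hne : x ≠ x0 := by rintro rfl; exact hs hs0
              exact walk2 (gAdj (adj_yy hne)) (gAdj (adj_yt i hs0))
        | u p => exact walk2 (gAdj (adj_by x).symm) (gAdj (adj_bu p))
      | t i s => cases w with
        | a =>
            obtain ⟨x, hx', hs⟩ := hc s
            exact walk2 (gAdj (adj_yt i hs).symm) (haY x hx').symm
        | b =>
            obtain ⟨p, hp, -⟩ := exists_pair hm2 i i
            exact walk2 (gAdj (adj_tu s hp)) (gAdj (adj_bu p).symm)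
        | y x =>
            by_cases hs : s ∈ x.1
            · exact walk1 (gAdj (adj_yt i hs)).symm
            · obtain ⟨x0, hx0', hs0⟩ := hc s
              have hne : x0 ≠ x := by rintro rfl; exact hs hs0
              exact walk2 (gAdj (adj_yt i hs0)).symm (gAdj (adj_yy hne))
        | t i' s' =>
            obtain ⟨p, hp, hp'⟩ := exists_pair hm2 i i'
            exact walk2 (gAdj (adj_tu s hp)) (gAdj (adj_tu s' hp').symm)
        | u p =>
            by_cases h : i = p.1.1 ∨ i = p.1.2
            · exact walk1 (gAdj (adj_tu s h))
            · obtain ⟨q, hq, -⟩ := exists_pair hm2 i i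
              have hne : q ≠ p := by rintro rfl; exact h hq
              exact walk2 (gAdj (adj_tu s hq)) (gAdj (adj_uu hne))
      | u p => cases w with
        | a => exact walk2 (gAdj (adj_bu p).symm) (gAdj adj_ab.symm)
        | b => exact walk1 (gAdj (adj_bu p).symm)
        | y x => exact walk2 (gAdj (adj_bu p).symm) (gAdj (adj_by x))
        | t i s =>
            by_cases h : i = p.1.1 ∨ i = p.1.2
            · exact walk1 (gAdj (adj_tu s h)).symm
            · obtain ⟨q, hq, -⟩ := exists_pair hm2 i i
              have hne : p ≠ q := by rintro rfl; exact h hq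
              exact walk2 (gAdj (adj_uu hne)) (gAdj (adj_tu s hq)).symm
        | u q =>
            by_cases h : p = q
            · subst h; exact walk0 _
            · exact walk1 (gAdj (adj_uu h))
  · rintro ⟨F, hFcard, hFgood, hwalk⟩
    have hbad : (F.biUnion badIdx).card ≤ 3 * k := by
      calc (F.biUnion badIdx).card ≤ ∑ e ∈ F, (badIdx e).card := Finset.card_biUnion_le
        _ ≤ ∑ _e ∈ F, 3 := Finset.sum_le_sum
            (fun e he => badIdx_card (hFgood e he).1 (hFgood e he).2)
        _ = 3 * F.card := by rw [Finset.sum_const, smul_eq_mul, mul_comm]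
        _ ≤ 3 * k := by omega
    have hex : ∃ i : Fin m, i ∉ F.biUnion badIdx := by
      by_contra hcon
      push_neg at hcon
      have h1 : (Finset.univ : Finset (Fin m)).card ≤ (F.biUnion badIdx).card :=
        Finset.card_le_card (fun i _ => hcon i)
      rw [Finset.card_univ, Fintype.card_fin] at h1
      have h2 : 4 * k ≤ m := by rw [hm]; exact Nat.mul_le_mul_right k hX
      omega
    obtain ⟨i, hi⟩ := hex
    have hit : ∀ e ∈ F, i ∉ badIdx e := fun e he h => hi (Finset.mem_biUnion.mpr ⟨e, he, h⟩)
    refine ⟨(X.attach.filter (fun x => s(RV.a, RV.y x) ∈ F)).image Subtype.val, ?_, ?_, ?_⟩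
    · intro z hz
      obtain ⟨x, -, rfl⟩ := Finset.mem_image.mp hz
      exact x.2
    · calc ((X.attach.filter (fun x => s(RV.a, RV.y x) ∈ F)).image Subtype.val).card
          ≤ (X.attach.filter (fun x => s(RV.a, RV.y x) ∈ F)).card := Finset.card_image_le
        _ ≤ F.card := by
            apply Finset.card_le_card_of_injOn (fun x => s(RV.a, RV.y x))
            · intro x hx; exact (Finset.mem_filter.mp hx).2
            · intro x _ x' _ h
              simp only [Sym2.eq, Sym2.rel_iff', Prod.mk.injEq] at h
              rcases h with ⟨-, h⟩ | h
              · exact RV.y.inj h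
              · exact absurd (congrArg Prod.fst h) (by simp [Prod.swap])
        _ ≤ k := hFcard
    · intro s
      obtain ⟨p, hlen⟩ := hwalk RV.a (RV.t i s)
      cases p with
      | cons h q =>
        cases q with
        | nil =>
            rw [adj_iff] at h
            simp only [baseRel] at h
            rcases h with ⟨-, h | h⟩ | ⟨hmem, -⟩
            · exact absurd h not_false
            · exact absurd h not_false
            · exact absurd (mem_badIdx_right (by simp [touchIdx]))
                (hit _ hmem)
        | cons h' q' =>
          cases q' with
          | nil =>
            rename_i w
            cases w with
            | a => exact absurd rfl h.ne
            | b =>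
                rw [adj_iff] at h'
                simp only [baseRel] at h'
                rcases h' with ⟨-, h' | h'⟩ | ⟨hmem, -⟩
                · exact absurd h' not_false
                · exact absurd h' not_false
                · exact absurd (mem_badIdx_right (by simp [touchIdx])) (hit _ hmem)
            | y x =>
                rw [adj_iff] at h h'
                simp only [baseRel] at h h'
                rcases h with ⟨-, h | h⟩ | ⟨hmem, -⟩
                · exact absurd h not_false
                · exact absurd h not_false
                · rcases h' with ⟨-, hs | hs⟩ | ⟨hmem', -⟩
                  · exact ⟨x.1, Finset.mem_image.mpr
                      ⟨x, Finset.mem_filter.mpr ⟨X.mem_attach x, hmem⟩, rfl⟩, hs⟩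
                  · exact absurd hs not_false
                  · exact absurd (mem_badIdx_right (by simp [touchIdx])) (hit _ hmem')
            | t j s' =>
                rw [adj_iff] at h'
                simp only [baseRel] at h'
                rcases h' with ⟨-, h' | h'⟩ | ⟨hmem, -⟩
                · exact absurd h' not_false
                · exact absurd h' not_false
                · exact absurd (mem_badIdx_right (by simp [touchIdx])) (hit _ hmem)
            | u q =>
                rw [adj_iff] at h h'
                simp only [baseRel] at h h'
                rcases h' with ⟨-, h' | hiq⟩ | ⟨hmem', -⟩
                · exact absurd h' not_false
                · -- i = q.1.1 ∨ i = q.1.2, so h gives F-edge a-u q touching i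
                  rcases h with ⟨-, h | h⟩ | ⟨hmem, -⟩
                  · exact absurd h not_false
                  · exact absurd h not_false
                  · refine absurd (mem_badIdx_right (v := RV.a) ?_) (hit _ hmem)
                    simp only [touchIdx, Finset.mem_insert, Finset.mem_singleton]
                    exact hiq
                · exact absurd (mem_badIdx_right (by simp [touchIdx])) (hit _ hmem')
          | cons h'' q'' =>
            exfalso
            simp only [SimpleGraph.Walk.length_cons] at hlen
            omega
end
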